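/- Let n ∈ ℝ³ be a unit vector, let v ∈ ℝ³ be nonzero with v · n = 0, let a ∈ ℝ³ satisfy a · n = 0, and let g ∈ ℝ³ satisfy (D(v) g) · n = 0. Then [(E(v) ⊗ a) g] · n = 0, i.e., Σ_{i=1}^{3} n_i Σ_{j=1}^{3} (Σ_{k=1}^{3} ∂_{v_k} D_{ij}(v) a_k) g_j = 0. -/

import Mathlib

/-!
Write `D(v) = (φ d_m + d_t |v|) I + (d_l - d_t) v vᵀ / |v|`. Since `v ⊥ n`, the condition
`(D(v) g) · n = 0` reduces to `(φ d_m + d_t |v|) (g · n) = 0`, so `g ⊥ n`. The derivative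
of `D` in the direction `a` is a combination of `I`, `a vᵀ`, `v aᵀ` and `v vᵀ`; paired with
`n` on the left and `g` on the right, every term carries one of the vanishing factors
`g · n`, `a · n`, `v · n`.
-/

open scoped BigOperators

/-- Euclidean norm of a vector in ℝ³. -/
noncomputable def norm3 (v : Fin 3 → ℝ) : ℝ := Real.sqrt (∑ i, v i ^ 2)

/-- The 3D Bear–Scheidegger diffusion–dispersion tensor. -/
noncomputable def bsD (φ dm dt dl : ℝ) (v : Fin 3 → ℝ) (i j : Fin 3) : ℝ :=
  (φ * dm + dt * norm3 v) * (if i = j then (1 : ℝ) else 0) + (dl - dt) * v i * v j / norm3 v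

/-- The partial derivative `∂_{v_k} D_{ij}(v)`. -/
noncomputable def pD (φ dm dt dl : ℝ) (v : Fin 3 → ℝ) (i j k : Fin 3) : ℝ :=
  fderiv ℝ (fun u => bsD φ dm dt dl u i j) v (Pi.single k 1)

open scoped Matrix

section DotProduct

variable {ι : Type*} [Fintype ι]

noncomputable def dotProductCLM (v : ι → ℝ) : (ι → ℝ) →L[ℝ] ℝ :=
  ∑ i, v i • ContinuousLinearMap.proj i

@[simp]
lemma dotProductCLM_apply (v a : ι → ℝ) : dotProductCLM v a = v ⬝ᵥ a := by
  simp [dotProductCLM, dotProduct]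

lemma hasFDerivAt_dotProduct_self (v : ι → ℝ) :
    HasFDerivAt (fun u : ι → ℝ => u ⬝ᵥ u) ((2 : ℝ) • dotProductCLM v) v := by
  have h := HasFDerivAt.fun_sum (u := Finset.univ)
    fun i _ => (hasFDerivAt_apply i v).mul (hasFDerivAt_apply (𝕜 := ℝ) i v)
  refine h.congr_fderiv (ContinuousLinearMap.ext fun a => ?_)
  simp [dotProduct, Finset.mul_sum, two_mul, Finset.sum_add_distrib]

lemma dotProduct_self_pos {v : ι → ℝ} (hv : v ≠ 0) : 0 < v ⬝ᵥ v := by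
  simpa using Matrix.dotProduct_star_self_pos_iff.2 hv

lemma sum_apply_single_mul [DecidableEq ι] (L : (ι → ℝ) →L[ℝ] ℝ) (a : ι → ℝ) :
    ∑ k, L (Pi.single k 1) * a k = L a := by
  conv_rhs => rw [pi_eq_sum_univ' a]
  simp [map_sum, mul_comm]

end DotProduct

lemma norm3_eq_sqrt_dotProduct (v : Fin 3 → ℝ) : norm3 v = √(v ⬝ᵥ v) := by
  simp [norm3, dotProduct, sq]

lemma norm3_pos {v : Fin 3 → ℝ} (hv : v ≠ 0) : 0 < norm3 v := by
  rw [norm3_eq_sqrt_dotProduct]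
  exact Real.sqrt_pos.2 (dotProduct_self_pos hv)

lemma hasFDerivAt_norm3 {v : Fin 3 → ℝ} (hv : v ≠ 0) :
    HasFDerivAt norm3 ((norm3 v)⁻¹ • dotProductCLM v) v := by
  rw [show norm3 = fun u => √(u ⬝ᵥ u) from funext norm3_eq_sqrt_dotProduct]
  refine ((hasFDerivAt_dotProduct_self v).sqrt (dotProduct_self_pos hv).ne').congr_fderiv
    (ContinuousLinearMap.ext fun a => ?_)
  simp [smul_smul]

lemma fderiv_bsD_apply (φ dm dt dl : ℝ) {v : Fin 3 → ℝ} (hv : v ≠ 0) (i j : Fin 3)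
    (a : Fin 3 → ℝ) :
    fderiv ℝ (fun u => bsD φ dm dt dl u i j) v a =
      dt * (v ⬝ᵥ a) / norm3 v * (if i = j then 1 else 0)
        + (dl - dt) * ((a i * v j + v i * a j) / norm3 v
          - v i * v j * (v ⬝ᵥ a) / norm3 v ^ 3) := by
  have hN := norm3_pos hv
  have hnorm := hasFDerivAt_norm3 hv
  have hisotropic :=
    ((hnorm.const_mul dt).const_add (φ * dm)).mul_const (if i = j then (1 : ℝ) else 0)
  have hinv := (hasDerivAt_inv hN.ne').comp_hasFDerivAt v hnorm
  have hanisotropic :=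
    (((hasFDerivAt_apply i v).fun_mul (hasFDerivAt_apply (𝕜 := ℝ) j v)).const_mul
      (dl - dt)).fun_mul hinv
  have hbsD : (fun u => bsD φ dm dt dl u i j) = fun u =>
      (φ * dm + dt * norm3 u) * (if i = j then 1 else 0)
        + (dl - dt) * (u i * u j) * (norm3 u)⁻¹ := by
    funext u
    simp only [bsD, div_eq_mul_inv, mul_assoc]
  have hderiv := hisotropic.fun_add hanisotropic
  simp only [Function.comp_def] at hderiv
  rw [hbsD, hderiv.fderiv]
  split_ifs <;>
    simp only [one_smul, zero_smul, zero_add, neg_smul, smul_neg, smul_add, add_apply, neg_apply,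
      smul_apply, dotProductCLM_apply, smul_eq_mul, ContinuousLinearMap.proj_apply, mul_one,
      mul_zero] <;>
    ring

lemma sum_bsD_mul_eq (φ dm dt dl : ℝ) (v g n : Fin 3 → ℝ) :
    ∑ i, (∑ j, bsD φ dm dt dl v i j * g j) * n i =
      (φ * dm + dt * norm3 v) * (g ⬝ᵥ n) + (dl - dt) * (v ⬝ᵥ g) * (v ⬝ᵥ n) / norm3 v := by
  simp only [bsD, dotProduct, Fin.sum_univ_three, Fin.isValue, mul_ite, mul_one, mul_zero,
    ↓reduceIte, Fin.reduceEq]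
  ring

lemma sum_mul_fderiv_bsD_eq (φ dm dt dl : ℝ) {v : Fin 3 → ℝ} (hv : v ≠ 0) (a g n : Fin 3 → ℝ) :
    ∑ i, n i * ∑ j, fderiv ℝ (fun u => bsD φ dm dt dl u i j) v a * g j =
      dt * (v ⬝ᵥ a) / norm3 v * (g ⬝ᵥ n)
        + (dl - dt) / norm3 v * ((a ⬝ᵥ n) * (v ⬝ᵥ g) + (v ⬝ᵥ n) * (a ⬝ᵥ g))
        - (dl - dt) / norm3 v ^ 3 * (v ⬝ᵥ n) * (v ⬝ᵥ g) * (v ⬝ᵥ a) := by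
  simp only [fderiv_bsD_apply φ dm dt dl hv]
  simp only [dotProduct, Fin.sum_univ_three, Fin.isValue, mul_ite, mul_one, mul_zero, ↓reduceIte,
    Fin.reduceEq]
  ring

theorem stmt13_general (φ dm dt dl : ℝ) (hφ : 0 < φ) (hdm : 0 < dm) (hdt : 0 < dt)
    (n v a g : Fin 3 → ℝ) (hv : v ≠ 0)
    (hvn : ∑ i, v i * n i = 0) (han : ∑ i, a i * n i = 0)
    (hg : ∑ i, (∑ j, bsD φ dm dt dl v i j * g j) * n i = 0) :
    ∑ i, n i * ∑ j, (∑ k, pD φ dm dt dl v i j k * a k) * g j = 0 := by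
  change v ⬝ᵥ n = 0 at hvn
  change a ⬝ᵥ n = 0 at han
  have hgn : g ⬝ᵥ n = 0 := by
    have hcoef : 0 < φ * dm + dt * norm3 v :=
      add_pos_of_pos_of_nonneg (mul_pos hφ hdm) (mul_nonneg hdt.le (norm3_pos hv).le)
    rw [sum_bsD_mul_eq, hvn, mul_zero, zero_div, add_zero] at hg
    exact (mul_eq_zero.1 hg).resolve_left hcoef.ne'
  simp only [pD, sum_apply_single_mul]
  rw [sum_mul_fderiv_bsD_eq φ dm dt dl hv, hgn, hvn, han]
  ring

theorem stmt13 (φ dm dt dl : ℝ) (hφ : 0 < φ) (hdm : 0 < dm) (hdt : 0 < dt) (hdl : 0 < dl)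
    (n v a g : Fin 3 → ℝ) (hn : ∑ i, n i ^ 2 = 1) (hv : v ≠ 0)
    (hvn : ∑ i, v i * n i = 0) (han : ∑ i, a i * n i = 0)
    (hg : ∑ i, (∑ j, bsD φ dm dt dl v i j * g j) * n i = 0) :
    ∑ i, n i * ∑ j, (∑ k, pD φ dm dt dl v i j k * a k) * g j = 0 :=
  stmt13_general φ dm dt dl hφ hdm hdt n v a g hv hvn han hg
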